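/- arXiv:2302.10869 — 5 statements merged into one kernel-verified Lean document; each statement's English description precedes it below -/
import Mathlib

section
/- Let H₁ and H₂ be complex Hilbert spaces, let A ⊆ B(H₁) and B ⊆ B(H₂) be norm-closed subalgebras, and let φ : A → B be a surjective isometric algebra isomorphism (a bijective linear multiplicative map with ‖φ(a)‖ = ‖a‖ for all a ∈ A). Then φ maps diag A onto diag B, and φ restricted to diag A is a *-isomorphism; that is, for every a ∈ A with a* ∈ A one has φ(a)* ∈ B and φ(a*) = φ(a)*. -/
/-!
A contractive homomorphism `π` on a closed operator algebra `A` stays contractive on the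
unitization `ℂ1 + A`. For `‖l‖ < 1` and `‖l + a‖ ≤ 1`, the Möbius transform
`b = a (1 - l̄ (l + a))⁻¹` lies in `A` (a geometric series), has norm at most one, and satisfies
`a = (1 - |l|²) b - l̄ b a`; applying `π` exhibits `l + π a` as the inverse Möbius transform of the
contraction `π b`, so `‖l + π a‖ ≤ 1`. Rescaling gives `‖1 + π a‖ ≤ max 1 ‖1 + a‖`.

Self-adjoint operators are characterised by `‖1 + i t h‖² ≤ 1 + O(t²)` for real `t`: for
self-adjoint `h` this is the C*-identity `‖1 + i t h‖² = ‖1 + t² h²‖`, and conversely the bound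
forces `Im ⟪ξ, h ξ⟫ = 0`. Hence `π` preserves self-adjointness and, splitting an element of
`diag A` into real and imaginary parts, commutes with the adjoint. Applying this to `φ` and to
`φ⁻¹` gives the theorem.
-/

noncomputable section

/-- The diagonal `diag A := A ∩ A*` of a set of Hilbert-space operators, i.e. the set of
elements of `A` whose (Hilbert space) adjoint also belongs to `A`. -/
def diagSet {K : Type*} [NormedAddCommGroup K] [InnerProductSpace ℂ K] [CompleteSpace K]
    (A : Set (K →L[ℂ] K)) : Set (K →L[ℂ] K) :=
  {a | a ∈ A ∧ ContinuousLinearMap.adjoint a ∈ A}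

open scoped InnerProductSpace ComplexConjugate

section Mobius

variable {H : Type*} [NormedAddCommGroup H] [InnerProductSpace ℂ H]

theorem norm_sub_smul_one_apply_le {x : H →L[ℂ] H} (hx : ‖x‖ ≤ 1) {l : ℂ} (hl : ‖l‖ ≤ 1)
    (ξ : H) : ‖(x - l • 1) ξ‖ ≤ ‖(1 - conj l • x) ξ‖ := by
  have hxξ : ‖x ξ‖ ≤ ‖ξ‖ := (x.le_of_opNorm_le hx ξ).trans_eq (one_mul _)
  have hre : RCLike.re ⟪ξ, conj l • x ξ⟫_ℂ = RCLike.re ⟪x ξ, l • ξ⟫_ℂ := by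
    rw [inner_smul_right, inner_smul_right, ← inner_conj_symm, ← map_mul, RCLike.conj_re]
  -- the cross terms agree, so the difference of the squares factors
  have key : ‖(1 - conj l • x) ξ‖ ^ 2 - ‖(x - l • 1) ξ‖ ^ 2
      = (1 - ‖l‖ ^ 2) * (‖ξ‖ ^ 2 - ‖x ξ‖ ^ 2) := by
    simp only [sub_apply, smul_apply, one_apply_eq_self]
    rw [@norm_sub_sq ℂ, @norm_sub_sq ℂ, hre, norm_smul, norm_smul, RCLike.norm_conj]
    ring
  have : 0 ≤ (1 - ‖l‖ ^ 2) * (‖ξ‖ ^ 2 - ‖x ξ‖ ^ 2) := by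
    apply mul_nonneg <;> nlinarith [norm_nonneg l, norm_nonneg (x ξ)]
  nlinarith [norm_nonneg ((x - l • 1) ξ), norm_nonneg ((1 - conj l • x) ξ)]

theorem norm_sub_smul_one_mul_inv_le_one {x : H →L[ℂ] H} (hx : ‖x‖ ≤ 1) {l : ℂ} (hl : ‖l‖ ≤ 1)
    (u : (H →L[ℂ] H)ˣ) (hu : (u : H →L[ℂ] H) = 1 - conj l • x) :
    ‖(x - l • 1) * ↑u⁻¹‖ ≤ 1 := by
  refine ContinuousLinearMap.opNorm_le_bound _ zero_le_one fun ξ => ?_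
  calc ‖((x - l • 1) * ↑u⁻¹) ξ‖ ≤ ‖(1 - conj l • x) ((↑u⁻¹ : H →L[ℂ] H) ξ)‖ :=
        norm_sub_smul_one_apply_le hx hl _
    _ = ‖((u : H →L[ℂ] H) * ↑u⁻¹) ξ‖ := by rw [hu]; rfl
    _ = 1 * ‖ξ‖ := by rw [u.mul_inv, one_mul]; rfl

end Mobius

theorem mul_inv_oneSub_mem {R : Type*} [NormedRing R] [HasSummableGeomSeries R]
    {S : AddSubmonoid R} (hS : IsClosed (S : Set R)) {z : R} (hz : ‖z‖ < 1)
    (hSz : ∀ s ∈ S, s * z ∈ S) {s : R} (hs : s ∈ S) : s * ↑(Units.oneSub z hz)⁻¹ ∈ S := by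
  have hpow : ∀ n : ℕ, s * z ^ n ∈ S := by
    intro n
    induction n with
    | zero => simpa using hs
    | succ n ih => simpa [pow_succ, mul_assoc] using hSz _ ih
  have hsum : HasSum (fun n => s * z ^ n) (s * ↑(Units.oneSub z hz)⁻¹) :=
    (summable_geometric_of_norm_lt_one hz).hasSum.mul_left s
  exact hS.mem_of_tendsto hsum.tendsto_sum_nat
    (Filter.Eventually.of_forall fun _ => sum_mem fun i _ => hpow i)

section Hermitian

open Complex

variable {H : Type*} [NormedAddCommGroup H] [InnerProductSpace ℂ H] [CompleteSpace H]

theorem IsSelfAdjoint.norm_one_add_smul_I_sq_le {h : H →L[ℂ] H} (hh : IsSelfAdjoint h) (t : ℝ) :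
    ‖1 + ((t : ℂ) * I) • h‖ ^ 2 ≤ 1 + ‖h‖ ^ 2 * t ^ 2 := by
  have hstar : star (1 + ((t : ℂ) * I) • h) * (1 + ((t : ℂ) * I) • h)
      = 1 + ((t : ℂ) ^ 2) • (h * h) := by
    simp only [star_add, star_one, star_smul, hh.star_eq, star_mul', Complex.star_def,
      Complex.conj_ofReal, Complex.conj_I, add_mul, one_mul, mul_add, mul_one, smul_mul_assoc,
      mul_smul_comm]
    have hI : (t : ℂ) * I * (t * -I) = t ^ 2 := by ring_nf; rw [I_sq]; ring
    rw [smul_add, smul_smul, hI]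
    module
  calc ‖1 + ((t : ℂ) * I) • h‖ ^ 2 = ‖1 + ((t : ℂ) ^ 2) • (h * h)‖ := by
        rw [sq, ← CStarRing.norm_star_mul_self, hstar]
    _ ≤ ‖(1 : H →L[ℂ] H)‖ + ‖(t : ℂ) ^ 2‖ * (‖h‖ * ‖h‖) :=
        (norm_add_le _ _).trans (by rw [norm_smul]; gcongr; exact norm_mul_le _ _)
    _ ≤ 1 + ‖(t : ℂ) ^ 2‖ * (‖h‖ * ‖h‖) := by gcongr; exact ContinuousLinearMap.norm_id_le
    _ = 1 + ‖h‖ ^ 2 * t ^ 2 := by rw [norm_pow, Complex.norm_real, Real.norm_eq_abs, sq_abs]; ring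

theorem isSelfAdjoint_of_norm_one_add_smul_I_sq_le {k : H →L[ℂ] H} {C : ℝ}
    (hk : ∀ t : ℝ, ‖1 + ((t : ℂ) * I) • k‖ ^ 2 ≤ 1 + C * t ^ 2) : IsSelfAdjoint k := by
  have him : ∀ ξ : H, (⟪ξ, k ξ⟫_ℂ).im = 0 := by
    intro ξ
    have hquad : ∀ t : ℝ,
        0 ≤ (C * ‖ξ‖ ^ 2 - ‖k ξ‖ ^ 2) * (t * t) + 2 * (⟪ξ, k ξ⟫_ℂ).im * t + 0 := by
      intro t
      have hexp : ‖(1 + ((t : ℂ) * I) • k) ξ‖ ^ 2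
          = ‖ξ‖ ^ 2 - 2 * (⟪ξ, k ξ⟫_ℂ).im * t + ‖k ξ‖ ^ 2 * t ^ 2 := by
        rw [add_apply, one_apply_eq_self, smul_apply, @norm_add_sq ℂ, inner_smul_right,
          norm_smul, mul_pow, norm_mul, Complex.norm_real, Complex.norm_I, mul_one,
          Real.norm_eq_abs, sq_abs]
        simp only [Complex.mul_re, Complex.mul_im, Complex.ofReal_re, Complex.I_re,
          Complex.ofReal_im, Complex.I_im, RCLike.re_to_complex]
        ring
      have hle : ‖(1 + ((t : ℂ) * I) • k) ξ‖ ^ 2 ≤ (1 + C * t ^ 2) * ‖ξ‖ ^ 2 :=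
        calc ‖(1 + ((t : ℂ) * I) • k) ξ‖ ^ 2 ≤ (‖1 + ((t : ℂ) * I) • k‖ * ‖ξ‖) ^ 2 := by
              gcongr; exact ContinuousLinearMap.le_opNorm _ _
          _ ≤ (1 + C * t ^ 2) * ‖ξ‖ ^ 2 := by rw [mul_pow]; gcongr; exact hk t
      nlinarith
    have hdisc := discrim_le_zero hquad
    simp only [discrim, mul_zero, sub_zero] at hdisc
    nlinarith [sq_nonneg (⟪ξ, k ξ⟫_ℂ).im]
  rw [ContinuousLinearMap.isSelfAdjoint_iff_isSymmetric,
    LinearMap.isSymmetric_iff_inner_map_self_real]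
  intro ξ
  rw [Complex.conj_eq_iff_im, ← inner_conj_symm, Complex.conj_im, neg_eq_zero]
  exact him ξ

end Hermitian

theorem norm_conj_smul_lt_one {E : Type*} [SeminormedAddCommGroup E] [NormedSpace ℂ E]
    {l : ℂ} (hl : ‖l‖ < 1) {x : E} (hx : ‖x‖ ≤ 1) : ‖conj l • x‖ < 1 := by
  rw [norm_smul, RCLike.norm_conj]
  exact (mul_le_of_le_one_right (norm_nonneg l) hx).trans_lt hl

section ContractiveHom

open Complex ComplexStarModule

variable {H₁ H₂ : Type*}
  [NormedAddCommGroup H₁] [InnerProductSpace ℂ H₁] [CompleteSpace H₁]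
  [NormedAddCommGroup H₂] [InnerProductSpace ℂ H₂] [CompleteSpace H₂]
  {A : NonUnitalSubalgebra ℂ (H₁ →L[ℂ] H₁)} (π : A →ₙₐ[ℂ] (H₂ →L[ℂ] H₂))

theorem norm_smul_one_add_map_le_one (hA : IsClosed (A : Set (H₁ →L[ℂ] H₁)))
    (hπ : ∀ a : A, ‖π a‖ ≤ ‖(a : H₁ →L[ℂ] H₁)‖) {l : ℂ} (hl : ‖l‖ < 1) {a : A}
    (ha : ‖l • 1 + (a : H₁ →L[ℂ] H₁)‖ ≤ 1) : ‖l • 1 + π a‖ ≤ 1 := by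
  set x : H₁ →L[ℂ] H₁ := l • 1 + a
  let u := Units.oneSub (conj l • x) (norm_conj_smul_lt_one hl ha)
  have hAx : ∀ s ∈ A.toAddSubmonoid, s * (conj l • x) ∈ A.toAddSubmonoid := fun s hs => by
    rw [mul_smul_comm, mul_add, mul_smul_comm, mul_one]
    exact A.smul_mem _ (A.add_mem (A.smul_mem l hs) (A.mul_mem hs a.2))
  let b : A := ⟨a * ↑u⁻¹, mul_inv_oneSub_mem hA _ hAx a.2⟩
  have hb : ‖(b : H₁ →L[ℂ] H₁)‖ ≤ 1 := by
    have hxa : x - l • 1 = a := add_sub_cancel_left _ _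
    simpa only [b, ← hxa] using norm_sub_smul_one_mul_inv_le_one ha hl.le u rfl
  have hab : a = (1 - conj l * l) • b - conj l • (b * a) := by
    have hbu : (b : H₁ →L[ℂ] H₁) * u = a := by simp [b, mul_assoc]
    apply Subtype.ext
    calc (a : H₁ →L[ℂ] H₁) = b * u := hbu.symm
      _ = _ := by
        simp only [u, x, Units.val_oneSub, mul_sub, mul_one, mul_smul_comm, mul_add]
        push_cast
        module
  set c := π b
  have hc : ‖c‖ ≤ 1 := (hπ b).trans hb
  have hπa : π a = (1 - conj l * l) • c - conj l • (c * π a) := by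
    conv_lhs => rw [hab]
    rw [map_sub, map_smul, map_smul, map_mul]
  let v := Units.oneSub (conj (-l) • c) (norm_conj_smul_lt_one (by rwa [norm_neg]) hc)
  have hv : (v : H₂ →L[ℂ] H₂) * (l • 1 + π a) = c - (-l) • 1 := by
    simp only [v, Units.val_oneSub, map_neg, neg_smul, sub_neg_eq_add, add_mul, one_mul,
      smul_mul_assoc, mul_add, mul_smul_comm, mul_one]
    linear_combination (norm := module) hπa
  have hcomm : Commute (c - (-l) • 1) v :=
    ((Commute.one_right c).sub_right ((Commute.refl c).smul_right _)).sub_left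
      ((Commute.one_left _).smul_left _)
  calc ‖l • 1 + π a‖ = ‖(c - (-l) • 1) * ↑v⁻¹‖ := by
        rw [hcomm.units_inv_right.eq, ← hv, ← mul_assoc, v.inv_mul, one_mul]
    _ ≤ 1 := norm_sub_smul_one_mul_inv_le_one hc (by rw [norm_neg]; exact hl.le) v rfl

theorem norm_one_add_map_le (hA : IsClosed (A : Set (H₁ →L[ℂ] H₁)))
    (hπ : ∀ a : A, ‖π a‖ ≤ ‖(a : H₁ →L[ℂ] H₁)‖) (a : A) :
    ‖1 + π a‖ ≤ max 1 ‖1 + (a : H₁ →L[ℂ] H₁)‖ := by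
  refine le_of_forall_gt_imp_ge_of_dense fun s hs => ?_
  obtain ⟨hs1, hsa⟩ := max_lt_iff.mp hs
  have hs0 : 0 < s := one_pos.trans hs1
  have hinv : ‖((s : ℂ)⁻¹)‖ = s⁻¹ := by simp [abs_of_pos hs0]
  have hscaled := norm_smul_one_add_map_le_one π hA hπ (l := (s : ℂ)⁻¹) (a := (s : ℂ)⁻¹ • a)
    (by rw [hinv]; exact inv_lt_one_of_one_lt₀ hs1)
    (by rw [NonUnitalSubalgebra.coe_smul, ← smul_add, norm_smul, hinv]
        exact inv_mul_le_one_of_le₀ hsa.le hs0.le)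
  rw [map_smul, ← smul_add, norm_smul, hinv, inv_mul_le_one₀ hs0] at hscaled
  exact hscaled

theorem isSelfAdjoint_map_of_norm_map_le (hA : IsClosed (A : Set (H₁ →L[ℂ] H₁)))
    (hπ : ∀ a : A, ‖π a‖ ≤ ‖(a : H₁ →L[ℂ] H₁)‖) {h : A}
    (hh : IsSelfAdjoint (h : H₁ →L[ℂ] H₁)) : IsSelfAdjoint (π h) := by
  refine isSelfAdjoint_of_norm_one_add_smul_I_sq_le (C := ‖(h : H₁ →L[ℂ] H₁)‖ ^ 2) fun t => ?_
  have hbound := norm_one_add_map_le π hA hπ (((t : ℂ) * I) • h)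
  rw [map_smul, NonUnitalSubalgebra.coe_smul] at hbound
  calc ‖1 + ((t : ℂ) * I) • π h‖ ^ 2
      ≤ max 1 ‖1 + ((t : ℂ) * I) • (h : H₁ →L[ℂ] H₁)‖ ^ 2 := by gcongr
    _ ≤ 1 + ‖(h : H₁ →L[ℂ] H₁)‖ ^ 2 * t ^ 2 := by
      rcases le_total 1 ‖1 + ((t : ℂ) * I) • (h : H₁ →L[ℂ] H₁)‖ with h1 | h1
      · rw [max_eq_right h1]; exact hh.norm_one_add_smul_I_sq_le t
      · rw [max_eq_left h1, one_pow]; nlinarith [sq_nonneg ‖(h : H₁ →L[ℂ] H₁)‖, sq_nonneg t]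

theorem map_star_of_norm_map_le (hA : IsClosed (A : Set (H₁ →L[ℂ] H₁)))
    (hπ : ∀ a : A, ‖π a‖ ≤ ‖(a : H₁ →L[ℂ] H₁)‖) {x y : A}
    (hxy : (y : H₁ →L[ℂ] H₁) = star (x : H₁ →L[ℂ] H₁)) : π y = star (π x) := by
  have hre : (ℜ (x : H₁ →L[ℂ] H₁) : H₁ →L[ℂ] H₁) ∈ A := by
    rw [realPart_apply_coe, ← hxy, ← Complex.coe_smul]
    exact A.smul_mem _ (A.add_mem x.2 y.2)
  have him : (ℑ (x : H₁ →L[ℂ] H₁) : H₁ →L[ℂ] H₁) ∈ A := by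
    rw [imaginaryPart_apply_coe, ← hxy, ← Complex.coe_smul]
    exact A.smul_mem _ (A.smul_mem _ (A.sub_mem x.2 y.2))
  let r : A := ⟨_, hre⟩
  let i : A := ⟨_, him⟩
  have hx : x = r + I • i := by
    apply Subtype.ext
    rw [NonUnitalSubalgebra.coe_add, NonUnitalSubalgebra.coe_smul]
    exact (realPart_add_I_smul_imaginaryPart _).symm
  have hy : y = r - I • i := by
    apply Subtype.ext
    rw [NonUnitalSubalgebra.coe_sub, NonUnitalSubalgebra.coe_smul, hxy]
    conv_lhs => rw [← realPart_add_I_smul_imaginaryPart (x : H₁ →L[ℂ] H₁)]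
    rw [star_add, star_smul, (ℜ (x : H₁ →L[ℂ] H₁)).prop.star_eq,
      (ℑ (x : H₁ →L[ℂ] H₁)).prop.star_eq, Complex.star_def, Complex.conj_I, neg_smul,
      ← sub_eq_add_neg]
  have hr := isSelfAdjoint_map_of_norm_map_le π hA hπ (h := r) (ℜ (x : H₁ →L[ℂ] H₁)).prop
  have hi := isSelfAdjoint_map_of_norm_map_le π hA hπ (h := i) (ℑ (x : H₁ →L[ℂ] H₁)).prop
  rw [hx, hy, map_add, map_sub, map_smul, star_add, star_smul, hr.star_eq, hi.star_eq,
    Complex.star_def, Complex.conj_I, neg_smul, sub_eq_add_neg]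

end ContractiveHom

/-- If `φ : A → B` is a surjective isometric algebra isomorphism between
norm-closed subalgebras of `B(H₁)` and `B(H₂)`, then `φ` maps `diag A` onto `diag B` and the
restriction of `φ` to `diag A` is a `*`-isomorphism: for every `a ∈ A` with `a* ∈ A` one has
`φ(a)* ∈ B` and `φ(a*) = φ(a)*`. -/
theorem stable_iso_stmt0
    {H₁ H₂ : Type*}
    [NormedAddCommGroup H₁] [InnerProductSpace ℂ H₁] [CompleteSpace H₁]
    [NormedAddCommGroup H₂] [InnerProductSpace ℂ H₂] [CompleteSpace H₂]
    (A : NonUnitalSubalgebra ℂ (H₁ →L[ℂ] H₁)) (B : NonUnitalSubalgebra ℂ (H₂ →L[ℂ] H₂))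
    (hA : IsClosed (A : Set (H₁ →L[ℂ] H₁))) (hB : IsClosed (B : Set (H₂ →L[ℂ] H₂)))
    (φ : A → B) (hbij : Function.Bijective φ)
    (hadd : ∀ x y : A, (↑(φ (x + y)) : H₂ →L[ℂ] H₂) = ↑(φ x) + ↑(φ y))
    (hsmul : ∀ (c : ℂ) (x : A), (↑(φ (c • x)) : H₂ →L[ℂ] H₂) = c • (↑(φ x) : H₂ →L[ℂ] H₂))
    (hmul : ∀ x y : A, (↑(φ (x * y)) : H₂ →L[ℂ] H₂) = ↑(φ x) * ↑(φ y))
    (hiso : ∀ x : A, ‖(↑(φ x) : H₂ →L[ℂ] H₂)‖ = ‖(↑x : H₁ →L[ℂ] H₁)‖) :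
    ((fun x : A => (↑(φ x) : H₂ →L[ℂ] H₂)) ''
        {x : A | (↑x : H₁ →L[ℂ] H₁) ∈ diagSet (A : Set (H₁ →L[ℂ] H₁))} =
      diagSet (B : Set (H₂ →L[ℂ] H₂))) ∧
    (∀ x y : A, (↑x : H₁ →L[ℂ] H₁) ∈ diagSet (A : Set (H₁ →L[ℂ] H₁)) →
      (↑y : H₁ →L[ℂ] H₁) = ContinuousLinearMap.adjoint (↑x : H₁ →L[ℂ] H₁) →
      (↑(φ y) : H₂ →L[ℂ] H₂) = ContinuousLinearMap.adjoint (↑(φ x) : H₂ →L[ℂ] H₂)) := by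
  let f : A →ₙₐ[ℂ] B :=
    { toFun := φ
      map_smul' := fun c x => Subtype.ext (hsmul c x)
      map_zero' := Subtype.ext (by rw [← zero_smul ℂ (0 : A), hsmul, zero_smul]; rfl)
      map_add' := fun x y => Subtype.ext (hadd x y)
      map_mul' := fun x y => Subtype.ext (hmul x y) }
  let e := Equiv.ofBijective φ hbij
  let g : B →ₙₐ[ℂ] A := f.inverse e.symm e.left_inv e.right_inv
  have hφe : ∀ b, φ (e.symm b) = b := e.apply_symm_apply
  have hφ : ∀ x y : A, (y : H₁ →L[ℂ] H₁) = star (x : H₁ →L[ℂ] H₁) →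
      (φ y : H₂ →L[ℂ] H₂) = star (φ x : H₂ →L[ℂ] H₂) := fun x y =>
    map_star_of_norm_map_le ((NonUnitalSubalgebraClass.subtype B).comp f) hA
      (fun x => (hiso x).le)
  have hψ : ∀ x y : B, (y : H₂ →L[ℂ] H₂) = star (x : H₂ →L[ℂ] H₂) →
      (e.symm y : H₁ →L[ℂ] H₁) = star (e.symm x : H₁ →L[ℂ] H₁) := fun x y =>
    map_star_of_norm_map_le ((NonUnitalSubalgebraClass.subtype A).comp g) hB
      (fun b => (hφe b ▸ hiso (e.symm b)).ge)
  simp only [diagSet, ← ContinuousLinearMap.star_eq_adjoint]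
  refine ⟨Set.ext fun b => ⟨?_, ?_⟩, fun x y _ hy => hφ x y hy⟩
  · rintro ⟨x, ⟨-, hx⟩, rfl⟩
    exact ⟨(φ x).2, hφ x ⟨_, hx⟩ rfl ▸ (φ _).2⟩
  · rintro ⟨hb, hb'⟩
    refine ⟨e.symm ⟨b, hb⟩, ⟨(e.symm _).2, hψ ⟨b, hb⟩ ⟨_, hb'⟩ rfl ▸ (e.symm _).2⟩, ?_⟩
    exact congrArg Subtype.val (hφe _)
end
end

section
/- Let H be a complex Hilbert space and let A ⊆ B(H) be a norm-closed subalgebra possessing a contractive approximate unit contained in its diagonal. Then diag(A⊗K) = (diag A)⊗K; that is, the diagonal of the closed linear span of {E_{ij}(a) : a ∈ A, i,j ∈ ℕ} in B(ℓ²(ℕ,H)) equals the closed linear span of {E_{ij}(d) : d ∈ diag A, i,j ∈ ℕ}. -/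
noncomputable section

open scoped ENNReal

variable {H : Type} [NormedAddCommGroup H] [InnerProductSpace ℂ H] [CompleteSpace H]

abbrev L2 (H : Type) [NormedAddCommGroup H] [InnerProductSpace ℂ H] : Type :=
  lp (fun _ : ℕ => H) 2

theorem lp_single_add (i : ℕ) (a b : H) :
    lp.single (E := fun _ : ℕ => H) 2 i (a + b) = lp.single 2 i a + lp.single 2 i b := by
  apply lp.ext
  funext k
  by_cases h : k = i
  · subst h
    simp [lp.coeFn_add, lp.single_apply_self]
  · simp [lp.coeFn_add, lp.single_apply_ne 2 i _ h]

/-- The operator `E_{ij}(a)` on `ℓ²(ℕ, H)`: `(E_{ij}(a) x)_k = a (x_j)` if `k = i`, else `0`. -/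
def Eij (a : H →L[ℂ] H) (i j : ℕ) : L2 H →L[ℂ] L2 H :=
  LinearMap.mkContinuous
    { toFun := fun x => lp.single 2 i (a (x j))
      map_add' := fun x y => by
        dsimp only
        rw [lp.coeFn_add, Pi.add_apply, map_add, lp_single_add]
      map_smul' := fun c x => by
        dsimp only
        rw [lp.coeFn_smul, Pi.smul_apply, map_smul, lp.single_smul]
        rfl }
    ‖a‖ (fun x => by
      have h1 : ‖lp.single (E := fun _ : ℕ => H) 2 i (a (x j))‖ = ‖a (x j)‖ := by
        simpa using lp.norm_single (p := 2) (by norm_num) (fun _ : ℕ => a (x j)) i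
      calc ‖lp.single (E := fun _ : ℕ => H) 2 i (a (x j))‖ = ‖a (x j)‖ := h1
        _ ≤ ‖a‖ * ‖x j‖ := a.le_opNorm _
        _ ≤ ‖a‖ * ‖x‖ := by
            gcongr
            exact lp.norm_apply_le_norm (by norm_num) x j)

@[simp] theorem Eij_apply (a : H →L[ℂ] H) (i j : ℕ) (x : L2 H) :
    Eij a i j x = lp.single 2 i (a (x j)) := rfl

theorem amplify_memℓp (S : H →L[ℂ] H) (x : L2 H) : Memℓp (fun k => S (x k)) 2 := by
  have ht : (0 : ℝ) < (2 : ℝ≥0∞).toReal := by norm_num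
  apply memℓp_gen
  have hx : Summable fun k => ‖x k‖ ^ (2 : ℝ≥0∞).toReal := (lp.memℓp x).summable ht
  refine Summable.of_nonneg_of_le (fun k => Real.rpow_nonneg (norm_nonneg _) _)
    (fun k => ?_) (hx.mul_left (‖S‖ ^ (2 : ℝ≥0∞).toReal))
  calc ‖S (x k)‖ ^ (2 : ℝ≥0∞).toReal
      ≤ (‖S‖ * ‖x k‖) ^ (2 : ℝ≥0∞).toReal :=
        Real.rpow_le_rpow (norm_nonneg _) (S.le_opNorm _) ht.le
    _ = ‖S‖ ^ (2 : ℝ≥0∞).toReal * ‖x k‖ ^ (2 : ℝ≥0∞).toReal :=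
        Real.mul_rpow (norm_nonneg _) (norm_nonneg _)

/-- The amplification `S ⊗ I` on `ℓ²(ℕ, H)`: `((S ⊗ I) x)_k = S (x_k)`. -/
def amplify (S : H →L[ℂ] H) : L2 H →L[ℂ] L2 H :=
  LinearMap.mkContinuous
    { toFun := fun x => (⟨fun k => S (x k), amplify_memℓp S x⟩ : L2 H)
      map_add' := fun x y => by
        apply lp.ext
        funext k
        show S ((x + y) k) = (_ + _ : L2 H) k
        rw [lp.coeFn_add, lp.coeFn_add, Pi.add_apply, Pi.add_apply, map_add]
      map_smul' := fun c x => by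
        apply lp.ext
        funext k
        show S ((c • x) k) = (c • _ : L2 H) k
        rw [lp.coeFn_smul, lp.coeFn_smul, Pi.smul_apply, Pi.smul_apply, map_smul] }
    ‖S‖ (fun x => by
      dsimp only
      have ht : (0 : ℝ) < (2 : ℝ≥0∞).toReal := by norm_num
      set t := (2 : ℝ≥0∞).toReal with htdef
      rw [← Real.rpow_le_rpow_iff (norm_nonneg _) (mul_nonneg (norm_nonneg S) (norm_nonneg x)) ht,
        Real.mul_rpow (norm_nonneg S) (norm_nonneg x), lp.norm_rpow_eq_tsum ht,
        lp.norm_rpow_eq_tsum ht x, ← tsum_mul_left]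
      have hsum1 : Summable fun k => ‖S (x k)‖ ^ t :=
        ((amplify_memℓp S x).summable ht)
      have hsum2 : Summable fun k => ‖S‖ ^ t * ‖x k‖ ^ t :=
        ((lp.memℓp x).summable ht).mul_left _
      refine Summable.tsum_le_tsum (fun k => ?_) hsum1 hsum2
      calc ‖S (x k)‖ ^ t ≤ (‖S‖ * ‖x k‖) ^ t :=
            Real.rpow_le_rpow (norm_nonneg _) (S.le_opNorm _) ht.le
        _ = ‖S‖ ^ t * ‖x k‖ ^ t := Real.mul_rpow (norm_nonneg _) (norm_nonneg _))

@[simp] theorem amplify_apply (S : H →L[ℂ] H) (x : L2 H) (k : ℕ) :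
    amplify S x k = S (x k) := rfl

/-- `A ⊗ K`: the closed linear span of the operators `E_{ij}(a)`, `a ∈ A`, `i j : ℕ`,
inside `B(ℓ²(ℕ, H))`.  This realizes the spatial tensor product of `A` with the compact
operators on `ℓ²(ℕ)`. -/
def tensorK (A : Set (H →L[ℂ] H)) : Set (L2 H →L[ℂ] L2 H) :=
  closure (↑(Submodule.span ℂ
    {T : L2 H →L[ℂ] L2 H | ∃ a ∈ A, ∃ i j : ℕ, T = Eij a i j}) : Set (L2 H →L[ℂ] L2 H))

/-!
The matrix entries `T ↦ eval i ∘L T ∘L single j` are continuous linear maps, so every entry of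
an operator in `A ⊗ K` lies in the closed subspace `A`; as the `(i, j)` entry of `T*` is the
adjoint of the `(j, i)` entry of `T`, the entries of an operator in `diag (A ⊗ K)` lie in `diag A`.
The corner compressions `P_n T P_n` are finite sums of `E_{ij}(T_{ij})`; they are uniformly
contractive and eventually fix the algebraic span, hence converge to `T` on its closure, which
puts `T` in `(diag A) ⊗ K`. Conversely, `(diag A) ⊗ K` is closed under adjoints because
`E_{ij}(a)* = E_{ji}(a*)`.
-/

set_option linter.unusedSectionVars false

open Filter Topology ContinuousLinearMap

theorem Equicontinuous.tendsto_of_eventually_eq_of_mem_closure {ι X : Type*} [UniformSpace X]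
    {F : ι → X → X} (hF : Equicontinuous F) {l : Filter ι} {D : Set X}
    (hD : ∀ x ∈ D, ∀ᶠ n in l, F n x = x) {x : X} (hx : x ∈ closure D) :
    Tendsto (F · x) l (𝓝 x) :=
  closure_minimal (fun y hy => tendsto_nhds_of_eventually_eq (hD y hy))
    (hF.isClosed_setOfPred_tendsto continuous_id) hx

namespace L2

def single (i : ℕ) : H →L[ℂ] L2 H := lp.singleContinuousLinearMap ℂ (fun _ => H) 2 i

def eval (i : ℕ) : L2 H →L[ℂ] H := lp.evalCLM ℂ (fun _ => H) 2 i

@[simp] theorem single_apply (i : ℕ) (v : H) : single i v = lp.single 2 i v := rfl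

@[simp] theorem eval_apply (i : ℕ) (x : L2 H) : eval i x = x i := rfl

theorem adjoint_single (i : ℕ) : adjoint (single (H := H) i) = eval i := by
  refine ((eq_adjoint_iff _ _).mpr fun x v => ?_).symm
  simp [lp.inner_single_right]

theorem adjoint_eval (i : ℕ) : adjoint (eval (H := H) i) = single i := by
  rw [← adjoint_single, adjoint_adjoint]

theorem eval_comp_single (i j : ℕ) :
    eval (H := H) i ∘L single j = if i = j then ContinuousLinearMap.id ℂ H else 0 := by
  ext v
  split_ifs with h
  · subst h; simp
  · simp [h]

theorem Eij_eq_comp (a : H →L[ℂ] H) (i j : ℕ) : Eij a i j = single i ∘L a ∘L eval j := rfl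

theorem adjoint_Eij (a : H →L[ℂ] H) (i j : ℕ) : adjoint (Eij a i j) = Eij (adjoint a) j i := by
  simp only [Eij_eq_comp, adjoint_comp, adjoint_single, adjoint_eval, comp_assoc]

def entry (i j : ℕ) : (L2 H →L[ℂ] L2 H) →L[ℂ] (H →L[ℂ] H) :=
  (compL ℂ H (L2 H) H (eval i)).comp ((compL ℂ H (L2 H) (L2 H)).flip (single j))

theorem entry_apply (i j : ℕ) (T : L2 H →L[ℂ] L2 H) : entry i j T = eval i ∘L T ∘L single j :=
  rfl

theorem entry_Eij (a : H →L[ℂ] H) (i j k l : ℕ) :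
    entry i j (Eij a k l) = if i = k ∧ l = j then a else 0 := by
  rw [entry_apply, Eij_eq_comp, ← comp_assoc, ← comp_assoc, eval_comp_single, comp_assoc,
    comp_assoc, eval_comp_single]
  by_cases hik : i = k <;> by_cases hlj : l = j <;> simp [hik, hlj]

theorem entry_adjoint (i j : ℕ) (T : L2 H →L[ℂ] L2 H) :
    entry i j (adjoint T) = adjoint (entry j i T) := by
  simp only [entry_apply, adjoint_comp, adjoint_single, adjoint_eval, comp_assoc]

def truncation (n : ℕ) : L2 H →L[ℂ] L2 H := ∑ k ∈ Finset.range n, single k ∘L eval k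

theorem eval_comp_truncation (i n : ℕ) :
    eval (H := H) i ∘L truncation n = if i < n then eval i else 0 := by
  ext x : 1
  split_ifs with h <;> simp [truncation, lp.single_apply, Pi.single_apply, h]

theorem adjoint_truncation (n : ℕ) : adjoint (truncation (H := H) n) = truncation n := by
  simp [truncation, adjoint_comp, adjoint_single, adjoint_eval]

theorem truncation_comp_single (i n : ℕ) :
    truncation n ∘L single (H := H) i = if i < n then single i else 0 := by
  rw [← adjoint_truncation, ← adjoint_eval, ← adjoint_comp, eval_comp_truncation]
  split_ifs <;> simp

theorem norm_truncation_le (n : ℕ) : ‖truncation (H := H) n‖ ≤ 1 := by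
  refine opNorm_le_bound _ zero_le_one fun x => ?_
  rw [one_mul]
  refine lp.norm_mono two_ne_zero fun i => ?_
  have := congr($(eval_comp_truncation (H := H) i n) x)
  simp only [coe_comp, Function.comp_apply, eval_apply] at this
  split_ifs at this <;> simp [this]

def compress (n : ℕ) : (L2 H →L[ℂ] L2 H) →L[ℂ] (L2 H →L[ℂ] L2 H) :=
  mulLeftRight ℂ _ (truncation n) (truncation n)

theorem compress_apply (n : ℕ) (T : L2 H →L[ℂ] L2 H) :
    compress n T = truncation n ∘L T ∘L truncation n :=
  rfl

theorem norm_compress_le (n : ℕ) : ‖compress (H := H) n‖ ≤ 1 :=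
  (opNorm_mulLeftRight_apply_apply_le _ _ _ _).trans
    (mul_le_one₀ (norm_truncation_le n) (norm_nonneg _) (norm_truncation_le n))

theorem compress_Eij {n i j : ℕ} (hi : i < n) (hj : j < n) (a : H →L[ℂ] H) :
    compress n (Eij a i j) = Eij a i j := by
  simp only [compress_apply, Eij_eq_comp, comp_assoc, eval_comp_truncation, if_pos hj]
  rw [← comp_assoc, truncation_comp_single, if_pos hi]

theorem compress_eq_sum (n : ℕ) (T : L2 H →L[ℂ] L2 H) :
    compress n T = ∑ i ∈ Finset.range n, ∑ j ∈ Finset.range n, Eij (entry i j T) i j := by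
  simp only [compress_apply, truncation, finsetSum_comp, comp_finsetSum, Eij_eq_comp,
    entry_apply, comp_assoc]
  exact Finset.sum_comm

end L2

open L2

def algTensorK (S : Set (H →L[ℂ] H)) : Submodule ℂ (L2 H →L[ℂ] L2 H) :=
  Submodule.span ℂ {T | ∃ a ∈ S, ∃ i j : ℕ, T = Eij a i j}

theorem tensorK_eq_closure (S : Set (H →L[ℂ] H)) : tensorK S = closure (algTensorK S) := rfl

theorem Eij_mem_algTensorK {S : Set (H →L[ℂ] H)} {a : H →L[ℂ] H} (ha : a ∈ S) (i j : ℕ) :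
    Eij a i j ∈ algTensorK S :=
  Submodule.subset_span ⟨a, ha, i, j, rfl⟩

theorem tensorK_mono {S S' : Set (H →L[ℂ] H)} (h : S ⊆ S') : tensorK S ⊆ tensorK S' :=
  closure_mono <| Submodule.span_mono fun _ ⟨a, ha, i, j, hT⟩ => ⟨a, h ha, i, j, hT⟩

theorem mapsTo_tensorK {σ : ℂ →+* ℂ} {F : Type*} [AddCommGroup F] [Module ℂ F]
    [TopologicalSpace F] (f : (L2 H →L[ℂ] L2 H) →SL[σ] F) {M : Submodule ℂ F}
    (hM : IsClosed (M : Set F)) {S : Set (H →L[ℂ] H)} (hf : ∀ a ∈ S, ∀ i j, f (Eij a i j) ∈ M) :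
    Set.MapsTo f (tensorK S) M := by
  refine closure_minimal (fun T hT => ?_) (hM.preimage f.continuous)
  refine (Submodule.span_le (p := M.comap (f : (L2 H →L[ℂ] L2 H) →ₛₗ[σ] F))).mpr ?_ hT
  rintro _ ⟨a, ha, i, j, rfl⟩
  exact hf a ha i j

theorem entry_mem_of_mem_tensorK {S : Set (H →L[ℂ] H)} {M : Submodule ℂ (H →L[ℂ] H)}
    (hM : IsClosed (M : Set (H →L[ℂ] H))) (hSM : S ⊆ M) {T : L2 H →L[ℂ] L2 H}
    (hT : T ∈ tensorK S) (i j : ℕ) : entry i j T ∈ M := by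
  refine mapsTo_tensorK (entry i j) hM (fun a ha k l => ?_) hT
  rw [entry_Eij]
  split_ifs
  exacts [hSM ha, M.zero_mem]

theorem adjoint_mem_tensorK {S : Set (H →L[ℂ] H)} (hS : ∀ a ∈ S, adjoint a ∈ S)
    {T : L2 H →L[ℂ] L2 H} (hT : T ∈ tensorK S) : adjoint T ∈ tensorK S := by
  rw [tensorK_eq_closure, ← Submodule.topologicalClosure_coe]
  refine mapsTo_tensorK
    (adjoint (E := L2 H) (F := L2 H)).toContinuousLinearEquiv.toContinuousLinearMap
    (Submodule.isClosed_topologicalClosure _) (fun a ha i j => ?_) hT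
  exact (algTensorK S).le_topologicalClosure (by
    simpa [adjoint_Eij] using Eij_mem_algTensorK (hS a ha) j i)

theorem eventually_compress_eq {S : Set (H →L[ℂ] H)} {T : L2 H →L[ℂ] L2 H}
    (hT : T ∈ algTensorK S) : ∀ᶠ n in atTop, compress n T = T := by
  induction hT using Submodule.span_induction with
  | mem _ hT =>
    obtain ⟨a, -, i, j, rfl⟩ := hT
    filter_upwards [eventually_gt_atTop (max i j)] with n hn
    exact compress_Eij ((le_max_left i j).trans_lt hn) ((le_max_right i j).trans_lt hn) a
  | zero => exact .of_forall fun n => map_zero _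
  | add T T' _ _ hT hT' =>
    filter_upwards [hT, hT'] with n h h'
    rw [map_add, h, h']
  | smul c T _ hT =>
    filter_upwards [hT] with n h
    rw [map_smul, h]

theorem tendsto_compress {S : Set (H →L[ℂ] H)} {T : L2 H →L[ℂ] L2 H} (hT : T ∈ tensorK S) :
    Tendsto (fun n => compress n T) atTop (𝓝 T) := by
  have hbdd : ∃ C, ∀ n, ‖compress (H := H) n‖ ≤ C := ⟨1, norm_compress_le⟩
  have hequi := ((NormedSpace.equicontinuous_TFAE (compress (H := H))).out 5 1).mp hbdd
  exact hequi.tendsto_of_eventually_eq_of_mem_closure (fun _ => eventually_compress_eq) hT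

theorem mem_tensorK_of_entry_mem {S S' : Set (H →L[ℂ] H)} {T : L2 H →L[ℂ] L2 H}
    (hT : T ∈ tensorK S) (hT' : ∀ i j, entry i j T ∈ S') : T ∈ tensorK S' := by
  refine mem_closure_of_tendsto (tendsto_compress hT) (.of_forall fun n => ?_)
  rw [compress_eq_sum]
  exact Submodule.sum_mem _ fun i _ => Submodule.sum_mem _ fun j _ =>
    Eij_mem_algTensorK (hT' i j) i j

theorem adjoint_mem_diagSet {K : Type*} [NormedAddCommGroup K] [InnerProductSpace ℂ K]
    [CompleteSpace K] {S : Set (K →L[ℂ] K)} {a : K →L[ℂ] K} (ha : a ∈ diagSet S) :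
    adjoint a ∈ diagSet S :=
  ⟨ha.2, (adjoint_adjoint a).symm ▸ ha.1⟩

theorem stable_iso_stmt1_general
    (A : NonUnitalSubalgebra ℂ (H →L[ℂ] H)) (hA : IsClosed (A : Set (H →L[ℂ] H))) :
    diagSet (tensorK (A : Set (H →L[ℂ] H))) = tensorK (diagSet (A : Set (H →L[ℂ] H))) := by
  have hentry {T : L2 H →L[ℂ] L2 H} (hT : T ∈ tensorK (A : Set (H →L[ℂ] H))) (i j : ℕ) :
      entry i j T ∈ A :=
    entry_mem_of_mem_tensorK (M := A.toSubmodule) hA subset_rfl hT i j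
  refine Set.Subset.antisymm (fun T hT => mem_tensorK_of_entry_mem hT.1 fun i j => ?_)
    fun T hT => ?_
  · refine ⟨hentry hT.1 i j, ?_⟩
    rw [← entry_adjoint]
    exact hentry hT.2 j i
  · have hdiag : diagSet (A : Set (H →L[ℂ] H)) ⊆ A := fun a ha => ha.1
    exact ⟨tensorK_mono hdiag hT,
      tensorK_mono hdiag (adjoint_mem_tensorK (fun _ => adjoint_mem_diagSet) hT)⟩

/-- If `A ⊆ B(H)` is a norm-closed subalgebra possessing a contractive
approximate unit contained in its diagonal, then `diag (A ⊗ K) = (diag A) ⊗ K`. -/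
theorem stable_iso_stmt1
    (A : NonUnitalSubalgebra ℂ (H →L[ℂ] H)) (hA : IsClosed (A : Set (H →L[ℂ] H)))
    (ι : Type) [SemilatticeSup ι] [Nonempty ι] (e : ι → H →L[ℂ] H)
    (he_mem : ∀ l, e l ∈ diagSet (A : Set (H →L[ℂ] H)))
    (he_contr : ∀ l, ‖e l‖ ≤ 1)
    (he_left : ∀ a ∈ A, Filter.Tendsto (fun l => ‖e l * a - a‖) Filter.atTop (nhds 0))
    (he_right : ∀ a ∈ A, Filter.Tendsto (fun l => ‖a * e l - a‖) Filter.atTop (nhds 0)) :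
    diagSet (tensorK (A : Set (H →L[ℂ] H))) = tensorK (diagSet (A : Set (H →L[ℂ] H))) :=
  stable_iso_stmt1_general A hA
end
end

section
/- Let H be a complex Hilbert space, let h₁,…,hₙ be mutually orthogonal unit vectors in H, and let f₁,…,fₙ be unit vectors in H satisfying s := Σ_{i≠j} |⟨f_i, f_j⟩| < 1. Let T : span{h₁,…,hₙ} → H be the linear operator determined by T h_i = f_i for i = 1,…,n. Then for every h ∈ span{h₁,…,hₙ}, one has (1 − s)^{1/2} ‖h‖ ≤ ‖Th‖ ≤ (1 + s)^{1/2} ‖h‖. -/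
/-!
Write `x = ∑ cᵢ hᵢ`, so that `‖x‖² = ∑ |cᵢ|²` and `T x = ∑ cᵢ fᵢ`. Then `‖T x‖² - ‖x‖²` is the
quadratic form `∑ᵢⱼ c̄ᵢ cⱼ (⟨fᵢ, fⱼ⟩ - ⟨hᵢ, hⱼ⟩)`, whose kernel vanishes on the diagonal and equals
`⟨fᵢ, fⱼ⟩` off it. By `|cᵢ| |cⱼ| ≤ (|cᵢ|² + |cⱼ|²) / 2` and the symmetry of the kernel's absolute
values (Schur's test), the form is bounded by the largest row sum of the kernel, which is at most
`s`, times `∑ |cᵢ|²`.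
-/

open scoped InnerProductSpace ComplexConjugate
open Finset

theorem sum_sum_mul_mul_le_of_sum_le {ι : Type*} [Fintype ι] {a : ι → ι → ℝ}
    (ha : ∀ i j, 0 ≤ a i j) (ha_symm : ∀ i j, a i j = a j i) {s : ℝ}
    (hrow : ∀ i, ∑ j, a i j ≤ s) (x : ι → ℝ) :
    ∑ i, ∑ j, x i * x j * a i j ≤ s * ∑ i, x i ^ 2 := by
  have hsymmetrize : ∑ i, ∑ j, (x i ^ 2 / 2 * a i j + x j ^ 2 / 2 * a i j)
      = ∑ i, x i ^ 2 * ∑ j, a i j := by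
    simp only [sum_add_distrib]
    rw [sum_comm (f := fun i j => x j ^ 2 / 2 * a i j)]
    simp only [← sum_add_distrib, mul_sum]
    refine sum_congr rfl fun i _ => sum_congr rfl fun j _ => ?_
    rw [ha_symm j i]
    ring
  calc ∑ i, ∑ j, x i * x j * a i j
      ≤ ∑ i, ∑ j, (x i ^ 2 / 2 * a i j + x j ^ 2 / 2 * a i j) := by
        gcongr with i _ j _
        nlinarith [sq_nonneg (x i - x j), ha i j]
    _ = ∑ i, x i ^ 2 * ∑ j, a i j := hsymmetrize
    _ ≤ ∑ i, x i ^ 2 * s := by gcongr with i _; exact hrow i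
    _ = s * ∑ i, x i ^ 2 := by rw [mul_sum]; simp_rw [mul_comm s]

theorem Real.sqrt_one_sub_mul_le_and_le_sqrt_one_add_mul {a b s : ℝ} (ha : 0 ≤ a) (hb : 0 ≤ b)
    (h : |a ^ 2 - b ^ 2| ≤ s * b ^ 2) :
    √(1 - s) * b ≤ a ∧ a ≤ √(1 + s) * b := by
  obtain ⟨hlow, hhigh⟩ := abs_le.mp h
  constructor
  · calc √(1 - s) * b = √((1 - s) * b ^ 2) := by
          rw [Real.sqrt_mul' _ (sq_nonneg b), Real.sqrt_sq hb]
      _ ≤ √(a ^ 2) := Real.sqrt_le_sqrt (by linarith)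
      _ = a := Real.sqrt_sq ha
  · calc a = √(a ^ 2) := (Real.sqrt_sq ha).symm
      _ ≤ √((1 + s) * b ^ 2) := Real.sqrt_le_sqrt (by linarith)
      _ = √(1 + s) * b := by rw [Real.sqrt_mul' _ (sq_nonneg b), Real.sqrt_sq hb]

section Gram

variable {ι 𝕜 E : Type*} [Fintype ι] [RCLike 𝕜] [NormedAddCommGroup E] [InnerProductSpace 𝕜 E]

theorem inner_sum_smul_sum_smul (c : ι → 𝕜) (f : ι → E) :
    ⟪∑ i, c i • f i, ∑ j, c j • f j⟫_𝕜 = ∑ i, ∑ j, conj (c i) * c j * ⟪f i, f j⟫_𝕜 := by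
  simp_rw [sum_inner, inner_sum, inner_smul_left, inner_smul_right, mul_assoc]

theorem abs_norm_sq_sum_smul_sub_le {f g : ι → E} {s : ℝ}
    (hrow : ∀ i, ∑ j, ‖⟪f i, f j⟫_𝕜 - ⟪g i, g j⟫_𝕜‖ ≤ s) (c : ι → 𝕜) :
    |‖∑ i, c i • f i‖ ^ 2 - ‖∑ i, c i • g i‖ ^ 2| ≤ s * ∑ i, ‖c i‖ ^ 2 := by
  have hdiff : ‖∑ i, c i • f i‖ ^ 2 - ‖∑ i, c i • g i‖ ^ 2
      = RCLike.re (∑ i, ∑ j, conj (c i) * c j * (⟪f i, f j⟫_𝕜 - ⟪g i, g j⟫_𝕜)) := by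
    simp only [@norm_sq_eq_re_inner 𝕜, inner_sum_smul_sum_smul, ← map_sub, ← sum_sub_distrib,
      mul_sub]
  have hsymm : ∀ i j, ‖⟪f i, f j⟫_𝕜 - ⟪g i, g j⟫_𝕜‖ = ‖⟪f j, f i⟫_𝕜 - ⟪g j, g i⟫_𝕜‖ := by
    intro i j
    rw [← inner_conj_symm (f i), ← inner_conj_symm (g i), ← map_sub, RCLike.norm_conj]
  calc |‖∑ i, c i • f i‖ ^ 2 - ‖∑ i, c i • g i‖ ^ 2|
      ≤ ‖∑ i, ∑ j, conj (c i) * c j * (⟪f i, f j⟫_𝕜 - ⟪g i, g j⟫_𝕜)‖ :=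
        hdiff ▸ RCLike.abs_re_le_norm _
    _ ≤ ∑ i, ∑ j, ‖c i‖ * ‖c j‖ * ‖⟪f i, f j⟫_𝕜 - ⟪g i, g j⟫_𝕜‖ := by
        refine (norm_sum_le _ _).trans (sum_le_sum fun i _ => ?_)
        refine (norm_sum_le _ _).trans (sum_le_sum fun j _ => ?_)
        rw [norm_mul, norm_mul, RCLike.norm_conj]
    _ ≤ s * ∑ i, ‖c i‖ ^ 2 :=
        sum_sum_mul_mul_le_of_sum_le (fun _ _ => norm_nonneg _) hsymm hrow _

theorem Orthonormal.norm_sum_smul_sq {v : ι → E} (hv : Orthonormal 𝕜 v) (c : ι → 𝕜) :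
    ‖∑ i, c i • v i‖ ^ 2 = ∑ i, ‖c i‖ ^ 2 := by
  rw [@norm_sq_eq_re_inner 𝕜, hv.inner_sum, map_sum]
  simp_rw [RCLike.conj_mul, ← RCLike.ofReal_pow, RCLike.ofReal_re]

theorem sum_norm_inner_sub_inner_eq [DecidableEq ι] {f v : ι → E} (hf : ∀ i, ‖f i‖ = 1)
    (hv : Orthonormal 𝕜 v) (i : ι) :
    ∑ j, ‖⟪f i, f j⟫_𝕜 - ⟪v i, v j⟫_𝕜‖ = ∑ j ∈ univ.filter (fun j => j ≠ i), ‖⟪f i, f j⟫_𝕜‖ := by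
  rw [sum_filter]
  refine sum_congr rfl fun j _ => ?_
  rcases eq_or_ne j i with rfl | hji
  · simp [inner_self_eq_norm_sq_to_K, hf j, hv.1 j]
  · rw [if_pos hji, hv.2 hji.symm, sub_zero]

end Gram

theorem stable_iso_stmt5_general
    {H : Type*} [NormedAddCommGroup H] [InnerProductSpace ℂ H]
    {n : ℕ} (h f : Fin n → H)
    (hh_unit : ∀ i, ‖h i‖ = 1)
    (hh_orth : ∀ i j, i ≠ j → ⟪h i, h j⟫_ℂ = 0)
    (hf_unit : ∀ i, ‖f i‖ = 1)
    (s : ℝ)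
    (hs : s = ∑ i : Fin n, ∑ j ∈ Finset.univ.filter (fun j => j ≠ i), ‖⟪f i, f j⟫_ℂ‖)
    (T : H →ₗ[ℂ] H) (hT : ∀ i, T (h i) = f i) :
    ∀ x ∈ Submodule.span ℂ (Set.range h),
      Real.sqrt (1 - s) * ‖x‖ ≤ ‖T x‖ ∧ ‖T x‖ ≤ Real.sqrt (1 + s) * ‖x‖ := by
  have hh : Orthonormal ℂ h := ⟨hh_unit, fun i j hij => hh_orth i j hij⟩
  have hrow (i : Fin n) : ∑ j, ‖⟪f i, f j⟫_ℂ - ⟪h i, h j⟫_ℂ‖ ≤ s := by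
    rw [sum_norm_inner_sub_inner_eq hf_unit hh, hs]
    exact single_le_sum (f := fun i => ∑ j ∈ univ.filter (fun j => j ≠ i), ‖⟪f i, f j⟫_ℂ‖)
      (fun _ _ => by positivity) (mem_univ i)
  rintro _ hx
  obtain ⟨c, rfl⟩ := (Submodule.mem_span_range_iff_exists_fun ℂ).mp hx
  have hTx : T (∑ i, c i • h i) = ∑ i, c i • f i := by simp [hT]
  refine Real.sqrt_one_sub_mul_le_and_le_sqrt_one_add_mul (norm_nonneg _) (norm_nonneg _) ?_
  rw [hTx]
  simpa only [hh.norm_sum_smul_sq] using abs_norm_sq_sum_smul_sub_le hrow c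

/-- Let `h₁, …, hₙ` be mutually orthogonal unit vectors and `f₁, …, fₙ` unit
vectors in a complex Hilbert space with `s := Σ_{i ≠ j} |⟨f_i, f_j⟩| < 1`.  If `T` is a linear
operator with `T hᵢ = fᵢ` for all `i`, then for every `h` in the span of the `hᵢ`,
`(1 - s)^{1/2} ‖h‖ ≤ ‖T h‖ ≤ (1 + s)^{1/2} ‖h‖`. -/
theorem stable_iso_stmt5
    {H : Type*} [NormedAddCommGroup H] [InnerProductSpace ℂ H] [CompleteSpace H]
    {n : ℕ} (h f : Fin n → H)
    (hh_unit : ∀ i, ‖h i‖ = 1)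
    (hh_orth : ∀ i j, i ≠ j → ⟪h i, h j⟫_ℂ = 0)
    (hf_unit : ∀ i, ‖f i‖ = 1)
    (s : ℝ)
    (hs : s = ∑ i : Fin n, ∑ j ∈ Finset.univ.filter (fun j => j ≠ i), ‖⟪f i, f j⟫_ℂ‖)
    (hs1 : s < 1)
    (T : H →ₗ[ℂ] H) (hT : ∀ i, T (h i) = f i) :
    ∀ x ∈ Submodule.span ℂ (Set.range h),
      Real.sqrt (1 - s) * ‖x‖ ≤ ‖T x‖ ∧ ‖T x‖ ≤ Real.sqrt (1 + s) * ‖x‖ :=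
  stable_iso_stmt5_general h f hh_unit hh_orth hf_unit s hs T hT
end

section
/- Let H be a complex Hilbert space and for each n ∈ ℕ let (g^{(n)}_i)_{i∈ℕ} be an orthonormal sequence in H. Then there exists a function σ : ℕ → ℕ such that the unit vectors f_n := g^{(n)}_{σ(n)} satisfy: the family (|⟨f_m, f_n⟩|)_{m≠n} is summable and Σ_{m≠n} |⟨f_m, f_n⟩| ≤ 1/4. -/
noncomputable section

open scoped InnerProductSpace

section Aux

variable {H : Type*} [NormedAddCommGroup H] [InnerProductSpace ℂ H]

/-- For a fixed vector `v`, only finitely many inner products against an orthonormal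
sequence can exceed a positive threshold (consequence of Bessel's inequality). -/
lemma bad_set_finite {e : ℕ → H} (he : Orthonormal ℂ e) (v : H) {c : ℝ} (hc : 0 < c) :
    {i : ℕ | c < ‖⟪v, e i⟫_ℂ‖}.Finite := by
  have hsum : Summable fun i => ‖⟪e i, v⟫_ℂ‖ ^ 2 := he.inner_products_summable v
  have htend := hsum.tendsto_cofinite_zero
  have hev : ∀ᶠ i in Filter.cofinite, ‖⟪e i, v⟫_ℂ‖ ^ 2 < c ^ 2 := by
    have : Set.Iio (c ^ 2) ∈ nhds (0 : ℝ) :=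
      Iio_mem_nhds (by positivity)
    exact htend this
  rw [Filter.eventually_cofinite] at hev
  refine hev.subset ?_
  intro i hi
  simp only [Set.mem_setOf_eq, not_lt] at *
  have h1 : ‖⟪v, e i⟫_ℂ‖ = ‖⟪e i, v⟫_ℂ‖ := norm_inner_symm _ _
  calc c ^ 2 ≤ ‖⟪v, e i⟫_ℂ‖ ^ 2 := by
        apply pow_le_pow_left₀ hc.le hi.le
    _ = ‖⟪e i, v⟫_ℂ‖ ^ 2 := by rw [h1]

lemma exists_good (g : ℕ → ℕ → H) (hg : ∀ n, Orthonormal ℂ (g n)) (prev : ℕ → ℕ) (n : ℕ) :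
    ∃ i : ℕ, ∀ m < n, ‖⟪g m (prev m), g n i⟫_ℂ‖ ≤ (1/16) * (1/4 : ℝ) ^ n := by
  set c : ℝ := (1/16) * (1/4 : ℝ) ^ n with hc
  have hcpos : 0 < c := by positivity
  have hfin : (⋃ m ∈ Finset.range n, {i : ℕ | c < ‖⟪g m (prev m), g n i⟫_ℂ‖}).Finite :=
    Set.Finite.biUnion (Finset.finite_toSet _)
      (fun m _ => bad_set_finite (hg n) (g m (prev m)) hcpos)
  have : (⋃ m ∈ Finset.range n, {i : ℕ | c < ‖⟪g m (prev m), g n i⟫_ℂ‖})ᶜ.Infinite :=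
    Set.Finite.infinite_compl hfin
  obtain ⟨i, hi⟩ := this.nonempty
  refine ⟨i, fun m hm => ?_⟩
  simp only [Set.mem_compl_iff, Set.mem_iUnion, not_exists, Set.mem_setOf_eq, not_lt] at hi
  exact hi m (Finset.mem_range.mpr hm)

/-- The recursively chosen indices. -/
def sig (g : ℕ → ℕ → H) (hg : ∀ n, Orthonormal ℂ (g n)) : ℕ → ℕ
  | n => Classical.choose
      (exists_good g hg (fun m => if h : m < n then sig g hg m else 0) n)

lemma sig_spec (g : ℕ → ℕ → H) (hg : ∀ n, Orthonormal ℂ (g n)) {m n : ℕ} (hmn : m < n) :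
    ‖⟪g m (sig g hg m), g n (sig g hg n)⟫_ℂ‖ ≤ (1/16) * (1/4 : ℝ) ^ n := by
  have hspec := Classical.choose_spec
      (exists_good g hg (fun m => if h : m < n then sig g hg m else 0) n)
  have h := hspec m hmn
  rw [dif_pos hmn] at h
  have hn : sig g hg n = Classical.choose
      (exists_good g hg (fun m => if h : m < n then sig g hg m else 0) n) := by
    rw [sig]
  rw [hn]
  exact h

end Aux

/-- Given, for each `n : ℕ`, an orthonormal sequence `(g^{(n)}_i)_{i ∈ ℕ}` in a
complex Hilbert space `H`, there is a choice function `σ : ℕ → ℕ` such that the unit vectors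
`f_n := g^{(n)}_{σ n}` satisfy: the family `(|⟨f_m, f_n⟩|)_{m ≠ n}` is summable with
`Σ_{m ≠ n} |⟨f_m, f_n⟩| ≤ 1/4`. -/
theorem stable_iso_stmt8
    {H : Type*} [NormedAddCommGroup H] [InnerProductSpace ℂ H]
    (g : ℕ → ℕ → H) (hg : ∀ n, Orthonormal ℂ (g n)) :
    ∃ σ : ℕ → ℕ,
      Summable (fun p : {q : ℕ × ℕ // q.1 ≠ q.2} =>
        ‖⟪g p.1.1 (σ p.1.1), g p.1.2 (σ p.1.2)⟫_ℂ‖) ∧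
      (∑' p : {q : ℕ × ℕ // q.1 ≠ q.2},
        ‖⟪g p.1.1 (σ p.1.1), g p.1.2 (σ p.1.2)⟫_ℂ‖) ≤ 1 / 4 := by
  refine ⟨sig g hg, ?_⟩
  set σ := sig g hg with hσ
  set f : ℕ → ℝ := fun n => (1/4 : ℝ) * (1/2 : ℝ) ^ n with hf
  have hgeo : Summable f :=
    (summable_geometric_of_lt_one (by norm_num) (by norm_num)).mul_left _
  have h0 : (0 : ℕ → ℝ) ≤ f := fun n => by rw [hf]; positivity
  have hnorm : Summable fun n => ‖f n‖ := by
    refine hgeo.congr fun n => ?_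
    rw [Real.norm_of_nonneg (h0 n)]
  have hbsum : Summable (fun p : ℕ × ℕ => f p.1 * f p.2) :=
    Summable.mul_of_nonneg hgeo hgeo h0 h0
  have htf : ∑' n, f n = 1/2 := by
    rw [hf, tsum_mul_left, tsum_geometric_of_lt_one (by norm_num) (by norm_num)]
    norm_num
  have h3 : (∑' p : ℕ × ℕ, f p.1 * f p.2) = 1/4 := by
    rw [← tsum_mul_tsum_of_summable_norm hnorm hnorm, htf]
    norm_num
  -- pointwise bound
  have habs : ∀ {m n : ℕ}, m < n →
      ‖⟪g m (σ m), g n (σ n)⟫_ℂ‖ ≤ f m * f n := by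
    intro m n h
    refine (sig_spec g hg h).trans ?_
    have e1 : (1/16) * (1/4 : ℝ) ^ n = f n * f n := by
      rw [hf, show ((1:ℝ)/4) = (1/2)*(1/2) by norm_num, mul_pow]
      ring
    rw [e1]
    refine mul_le_mul_of_nonneg_right ?_ (h0 n)
    rw [hf]
    exact mul_le_mul_of_nonneg_left
      (pow_le_pow_of_le_one (by norm_num) (by norm_num) h.le) (by norm_num)
  have key : ∀ p : {q : ℕ × ℕ // q.1 ≠ q.2},
      ‖⟪g p.1.1 (σ p.1.1), g p.1.2 (σ p.1.2)⟫_ℂ‖ ≤ f p.1.1 * f p.1.2 := by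
    rintro ⟨⟨m, n⟩, hmn⟩
    rcases lt_or_gt_of_ne hmn with h | h
    · exact habs h
    · have h2 := habs h
      rw [norm_inner_symm]
      calc ‖⟪g n (σ n), g m (σ m)⟫_ℂ‖ ≤ f n * f m := h2
        _ = f m * f n := mul_comm _ _
  have hsubsum : Summable (fun p : {q : ℕ × ℕ // q.1 ≠ q.2} => f p.1.1 * f p.1.2) :=
    hbsum.subtype _
  have hsum : Summable (fun p : {q : ℕ × ℕ // q.1 ≠ q.2} =>
      ‖⟪g p.1.1 (σ p.1.1), g p.1.2 (σ p.1.2)⟫_ℂ‖) :=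
    Summable.of_nonneg_of_le (fun _ => norm_nonneg _) key hsubsum
  refine ⟨hsum, ?_⟩
  have h1 : (∑' p : {q : ℕ × ℕ // q.1 ≠ q.2},
      ‖⟪g p.1.1 (σ p.1.1), g p.1.2 (σ p.1.2)⟫_ℂ‖)
      ≤ ∑' p : {q : ℕ × ℕ // q.1 ≠ q.2}, f p.1.1 * f p.1.2 :=
    Summable.tsum_le_tsum key hsum hsubsum
  have h2 : (∑' p : {q : ℕ × ℕ // q.1 ≠ q.2}, f p.1.1 * f p.1.2)
      ≤ ∑' p : ℕ × ℕ, f p.1 * f p.2 :=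
    Summable.tsum_subtype_le (fun p : ℕ × ℕ => f p.1 * f p.2) _
      (fun p => mul_nonneg (h0 p.1) (h0 p.2)) hbsum
  linarith
end
end

section
/- Let X be a contractible compact Hausdorff topological space, let B be a unital C*-algebra, and let f : X → B be a continuous function such that f(x) is a projection (f(x)* = f(x) = f(x)²) for every x ∈ X. Then there exist a point x₀ ∈ X and a continuous function u : X → B such that u(x) is a unitary of B for every x ∈ X and u(x) f(x) u(x)* = f(x₀) for all x ∈ X. In particular, every projection-valued element of C(X, B) is equivalent to a constant function via a unitary of C(X, B). -/
/-!
Two projections `p`, `q` of a unital C*-algebra with `‖p - q‖ < 1` are unitarily equivalent: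
`a = q p + (1 - q)(1 - p)` satisfies `a p = q a` and `a* a = a a* = 1 - (p - q)²`, which is
invertible; since `(p - q)²` commutes with `p`, the unitary part `a (a* a)^(-1/2)` of `a` still
conjugates `p` to `q`. Hence unitary equivalence classes of projections are open, and a
continuous path of projections stays in one class. A contraction `H` of `X` turns `f` into the
path `t ↦ f ∘ H t` of projections in `C(X, B)` from `f` to the constant `f x₀`.
-/

open CFC

section Intertwiner

variable {R : Type*} [Ring R] {p q : R}

def intertwiner (p q : R) : R := q * p + (1 - q) * (1 - p)

variable (hp : IsIdempotentElem p) (hq : IsIdempotentElem q)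
include hp hq

lemma IsIdempotentElem.commute_sub_mul_sub : Commute p ((p - q) * (p - q)) := by
  simp only [Commute, SemiconjBy, mul_sub, sub_mul, mul_assoc, hp.eq, hq.eq, hp.mul_self_mul]
  abel

lemma intertwiner_mul : intertwiner p q * p = q * intertwiner p q := by
  simp only [intertwiner, add_mul, mul_add, sub_mul, mul_sub, one_mul, mul_one, mul_assoc, hp.eq,
    hq.eq, hq.mul_self_mul]
  abel

lemma intertwiner_mul_intertwiner :
    intertwiner q p * intertwiner p q = 1 - (p - q) * (p - q) := by
  simp only [intertwiner, mul_add, add_mul, mul_sub, sub_mul, mul_one, one_mul, mul_assoc, hp.eq,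
    hq.eq, hq.mul_self_mul]
  abel

end Intertwiner

lemma star_intertwiner {R : Type*} [Ring R] [StarRing R] {p q : R} (hp : IsSelfAdjoint p)
    (hq : IsSelfAdjoint q) : star (intertwiner p q) = intertwiner q p := by
  simp [intertwiner, hp.star_eq, hq.star_eq]

def UnitarilyEquivalent {R : Type*} [Monoid R] [StarMul R] (p q : R) : Prop :=
  ∃ u ∈ unitary R, u * p * star u = q

lemma UnitarilyEquivalent.trans {R : Type*} [Monoid R] [StarMul R] {p q r : R}
    (hpq : UnitarilyEquivalent p q) (hqr : UnitarilyEquivalent q r) : UnitarilyEquivalent p r := by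
  obtain ⟨u, hu, rfl⟩ := hpq
  obtain ⟨v, hv, rfl⟩ := hqr
  exact ⟨v * u, Submonoid.mul_mem _ hv hu, by simp only [star_mul, mul_assoc]⟩

lemma IsUnit.mul_rpow_neg_half_mem_unitary {A : Type*} [CStarAlgebra A] [PartialOrder A]
    [StarOrderedRing A] {a : A} (ha : IsUnit a) :
    a * (star a * a) ^ (-(1 / 2) : ℝ) ∈ unitary A := by
  have hpos : IsStrictlyPositive (star a * a) :=
    (ha.star.mul ha).isStrictlyPositive (star_mul_self_nonneg a)
  refine (ha.mul (hpos.isUnit.cfcRpow _)).mem_unitary_of_star_mul_self ?_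
  rw [star_mul, rpow_nonneg.isSelfAdjoint.star_eq, mul_assoc, ← mul_assoc (star a), ← mul_assoc]
  exact conjugate_rpow_neg_one_half _

section CStarAlgebra

variable {A : Type*} [CStarAlgebra A]

lemma IsStarProjection.unitarilyEquivalent_of_norm_sub_lt_one {p q : A} (hp : IsStarProjection p)
    (hq : IsStarProjection q) (hpq : ‖p - q‖ < 1) : UnitarilyEquivalent p q := by
  let := CStarAlgebra.spectralOrder A
  have := CStarAlgebra.spectralOrderedRing A
  set a := intertwiner p q
  set d := (p - q) * (p - q)
  have hap : a * p = q * a := intertwiner_mul hp.isIdempotentElem hq.isIdempotentElem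
  have hstar : star a = intertwiner q p := star_intertwiner hp.isSelfAdjoint hq.isSelfAdjoint
  have hstar_mul : star a * a = 1 - d := by
    rw [hstar, intertwiner_mul_intertwiner hp.isIdempotentElem hq.isIdempotentElem]
  have hmul_star : a * star a = 1 - d := by
    rw [hstar, intertwiner_mul_intertwiner hq.isIdempotentElem hp.isIdempotentElem, ← neg_sub p q,
      neg_mul_neg]
  have hd : ‖d‖ < 1 :=
    (norm_mul_le _ _).trans_lt (mul_lt_one_of_nonneg_of_lt_one_left (norm_nonneg _) hpq hpq.le)
  have ha : IsUnit a := by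
    have hnormal : Commute (star a) a := hstar_mul.trans hmul_star.symm
    exact (hnormal.isUnit_mul_iff.mp (hstar_mul ▸ (Units.oneSub d hd).isUnit)).2
  set z := (star a * a) ^ (-(1 / 2) : ℝ)
  have hzp : Commute z p := by
    refine Commute.cfc_nnreal ?_ _
    rw [hstar_mul]
    exact (Commute.one_left p).sub_left
      (hp.isIdempotentElem.commute_sub_mul_sub hq.isIdempotentElem).symm
  refine ⟨a * z, ha.mul_rpow_neg_half_mem_unitary, ?_⟩
  calc a * z * p * star (a * z) = a * p * z * star (a * z) := by
        rw [mul_assoc a, hzp.eq, ← mul_assoc]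
    _ = q * (a * z * star (a * z)) := by rw [hap]; simp only [mul_assoc]
    _ = q := by rw [Unitary.mul_star_self_of_mem ha.mul_rpow_neg_half_mem_unitary, mul_one]

lemma unitarilyEquivalent_of_continuous {T : Type*} [TopologicalSpace T] [PreconnectedSpace T]
    {P : T → A} (hP : Continuous P) (hproj : ∀ t, IsStarProjection (P t)) (s t : T) :
    UnitarilyEquivalent (P s) (P t) := by
  refine PreconnectedSpace.induction₂' (fun s t ↦ UnitarilyEquivalent (P s) (P t)) (fun s ↦ ?_)
    ⟨fun _ _ _ ↦ UnitarilyEquivalent.trans⟩ s t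
  filter_upwards [(hP.tendsto s).eventually (Metric.ball_mem_nhds (P s) one_pos)] with t ht
  rw [dist_eq_norm] at ht
  exact ⟨(hproj s).unitarilyEquivalent_of_norm_sub_lt_one (hproj t) (norm_sub_rev (P t) _ ▸ ht),
    (hproj t).unitarilyEquivalent_of_norm_sub_lt_one (hproj s) ht⟩

end CStarAlgebra

theorem stable_iso_stmt9_general
    {X : Type*} [TopologicalSpace X] [CompactSpace X] [ContractibleSpace X]
    {B : Type*} [NormedRing B] [StarRing B] [CStarRing B] [NormedAlgebra ℂ B]
    [StarModule ℂ B] [CompleteSpace B]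
    (f : C(X, B)) (hf_sa : ∀ x, star (f x) = f x) (hf_idem : ∀ x, f x * f x = f x) :
    ∃ (x₀ : X) (u : C(X, B)),
      (∀ x, star (u x) * u x = 1 ∧ u x * star (u x) = 1) ∧
      (∀ x, u x * f x * star (u x) = f x₀) := by
  let : CStarAlgebra B := { }
  obtain ⟨x₀, ⟨H⟩⟩ := id_nullhomotopic X
  let P : C(unitInterval, C(X, B)) := (f.comp H.toContinuousMap).curry
  have hP : ∀ t, IsStarProjection (P t) := fun t ↦
    ⟨ContinuousMap.ext fun x ↦ hf_idem _, ContinuousMap.ext fun x ↦ hf_sa _⟩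
  obtain ⟨u, hu, hconj⟩ := unitarilyEquivalent_of_continuous P.continuous hP 0 1
  refine ⟨x₀, u, fun x ↦ ⟨?_, ?_⟩, fun x ↦ ?_⟩
  · exact congr($(Unitary.star_mul_self_of_mem hu) x)
  · exact congr($(Unitary.mul_star_self_of_mem hu) x)
  · simpa [P] using congr($hconj x)

/-- Let `X` be a contractible compact Hausdorff space, `B` a unital
C*-algebra, and `f : X → B` a continuous projection-valued function.  Then there are a point
`x₀ ∈ X` and a continuous unitary-valued function `u : X → B` with
`u x * f x * (u x)* = f x₀` for all `x`; i.e. every projection-valued element of `C(X, B)` is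
unitarily equivalent to a constant function. -/
theorem stable_iso_stmt9
    {X : Type*} [TopologicalSpace X] [CompactSpace X] [T2Space X] [ContractibleSpace X]
    {B : Type*} [NormedRing B] [StarRing B] [CStarRing B] [NormedAlgebra ℂ B]
    [StarModule ℂ B] [CompleteSpace B]
    (f : C(X, B)) (hf_sa : ∀ x, star (f x) = f x) (hf_idem : ∀ x, f x * f x = f x) :
    ∃ (x₀ : X) (u : C(X, B)),
      (∀ x, star (u x) * u x = 1 ∧ u x * star (u x) = 1) ∧
      (∀ x, u x * f x * star (u x) = f x₀) :=
  stable_iso_stmt9_general f hf_sa hf_idem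
end
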